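/- arXiv:1311.1545 — 2 statements merged into one kernel-verified Lean document; each statement's English description precedes it below -/
import Mathlib

section
/- For the two vector fields σ₁(y,z) = (z·√Γ₁₁, α(z)·√Γ₂₁) and σ₂(y,z) = (z·√Γ₁₂, α(z)·√Γ₂₂) on ℝ², where √Γ is a fixed invertible 2×2 matrix with √Γ(√Γ)* = Γ and α : ℝ → ℝ is smooth, the Lie bracket satisfies [σ₁, σ₂](y,z) = −det(√Γ) · (α(z), 0). -/
lemma aux_hasFDerivAt (α : ℝ → ℝ) (hα : ContDiff ℝ (⊤ : ℕ∞) α) (a b : ℝ) (p : ℝ × ℝ) :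
    HasFDerivAt (fun q : ℝ × ℝ => (q.2 * a, α q.2 * b))
      (((ContinuousLinearMap.snd ℝ ℝ ℝ).smulRight a).prod
        ((deriv α p.2 • ContinuousLinearMap.snd ℝ ℝ ℝ).smulRight b)) p := by
  have hd : HasDerivAt α (deriv α p.2) p.2 :=
    (hα.differentiable (by simp) p.2).hasDerivAt
  have hsnd : HasFDerivAt (fun q : ℝ × ℝ => q.2) (ContinuousLinearMap.snd ℝ ℝ ℝ) p :=
    hasFDerivAt_snd
  have hA : HasFDerivAt (fun q : ℝ × ℝ => α q.2)
      (deriv α p.2 • ContinuousLinearMap.snd ℝ ℝ ℝ) p :=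
    hd.comp_hasFDerivAt p hsnd
  have h1 : HasFDerivAt (fun q : ℝ × ℝ => q.2 * a)
      ((ContinuousLinearMap.snd ℝ ℝ ℝ).smulRight a) p := by
    exact (hsnd.mul_const' a).congr_fderiv (ContinuousLinearMap.ext fun x => by simp [mul_comm, mul_left_comm])
  have h2 : HasFDerivAt (fun q : ℝ × ℝ => α q.2 * b)
      ((deriv α p.2 • ContinuousLinearMap.snd ℝ ℝ ℝ).smulRight b) p := by
    exact (hA.mul_const' b).congr_fderiv (ContinuousLinearMap.ext fun x => by simp [mul_comm, mul_left_comm])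
  exact h1.prodMk h2

/-- Lie bracket of the stochastic volatility vector fields:
`[σ₁, σ₂](y,z) = −det(√Γ) · (α(z), 0)`, where `σⱼ(y,z) = (z·√Γ₁ⱼ, α(z)·√Γ₂ⱼ)`. -/
theorem lie_bracket_stoch_vol_fields
    (g : Matrix (Fin 2) (Fin 2) ℝ) (α : ℝ → ℝ) (hα : ContDiff ℝ (⊤ : ℕ∞) α)
    (σ₁ σ₂ : ℝ × ℝ → ℝ × ℝ)
    (hσ₁ : ∀ p : ℝ × ℝ, σ₁ p = (p.2 * g 0 0, α p.2 * g 1 0))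
    (hσ₂ : ∀ p : ℝ × ℝ, σ₂ p = (p.2 * g 0 1, α p.2 * g 1 1)) :
    ∀ p : ℝ × ℝ,
      fderiv ℝ σ₂ p (σ₁ p) - fderiv ℝ σ₁ p (σ₂ p) = ((-g.det * α p.2, 0) : ℝ × ℝ) := by
  have h1 : σ₁ = fun p : ℝ × ℝ => (p.2 * g 0 0, α p.2 * g 1 0) := funext hσ₁
  have h2 : σ₂ = fun p : ℝ × ℝ => (p.2 * g 0 1, α p.2 * g 1 1) := funext hσ₂
  subst h1 h2
  intro p
  rw [(aux_hasFDerivAt α hα (g 0 0) (g 1 0) p).fderiv,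
      (aux_hasFDerivAt α hα (g 0 1) (g 1 1) p).fderiv]
  simp [Matrix.det_fin_two, Prod.ext_iff, smul_eq_mul]
  constructor <;> ring
end

section
/- Fourier inversion bound for densities: let p : ℝⁿ → [0,∞) be a continuous integrable function, x ∈ ℝⁿ, R > 0, and φ_R a smooth function with 1_{B_{R/2}(x)} ≤ φ_R ≤ 1_{B_R(x)}. Set ĝ(ξ) = ∫ e^{i⟨ξ,u⟩} p(u) φ_R(u) du. Suppose (a) |ĝ(ξ)| ≤ M for all ξ (with M = ∫_{B_R(x)} p), and (b) |ĝ(ξ)| ≤ A / (1 + |∏ⱼ ξ^j|^k) for all ξ, for constants A > 0 and k large enough that ∫ (1 + |∏ⱼξ^j|^k)^{−(1−q)} dξ =: I_q < ∞ for a given q ∈ (0,1). Then p(x) ≤ (2π)^{−n} I_q · M^q · A^{1−q}. -/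
open MeasureTheory Real FourierTransform

/-- Fourier-interpolation bound for densities: if `gHat` is the Fourier transform of `p·φ_R`,
`|gHat| ≤ M` with `M = ∫_{B_R(x)} p`, and `|gHat(ξ)| ≤ A/(1+|∏ⱼξⱼ|^k)` with the interpolated
integral `I_q` finite, then `p(x) ≤ (2π)^{-n} I_q M^q A^{1-q}`. -/
theorem fourier_interpolation_density_bound
    {n : ℕ} (p : EuclideanSpace ℝ (Fin n) → ℝ)
    (hpc : Continuous p) (hpint : Integrable p) (hp0 : ∀ u, 0 ≤ p u)
    (x : EuclideanSpace ℝ (Fin n)) (R : ℝ) (hR : 0 < R)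
    (φR : EuclideanSpace ℝ (Fin n) → ℝ) (hφsmooth : ContDiff ℝ (⊤ : ℕ∞) φR)
    (hφ01 : ∀ u, 0 ≤ φR u ∧ φR u ≤ 1)
    (hφ1 : ∀ u ∈ Metric.ball x (R / 2), φR u = 1)
    (hφ0 : ∀ u ∉ Metric.ball x R, φR u = 0)
    (gHat : EuclideanSpace ℝ (Fin n) → ℂ)
    (hg : ∀ ξ, gHat ξ = ∫ u, Complex.exp (Complex.I * ((inner ℝ ξ u : ℝ) : ℂ)) *
      ((p u * φR u : ℝ) : ℂ))
    (M : ℝ) (hM : M = ∫ u in Metric.ball x R, p u)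
    (hMb : ∀ ξ, ‖gHat ξ‖ ≤ M)
    (A : ℝ) (hA : 0 < A) (k : ℕ)
    (hAb : ∀ ξ, ‖gHat ξ‖ ≤ A / (1 + |∏ j, ξ j| ^ k))
    (q : ℝ) (hq : q ∈ Set.Ioo (0 : ℝ) 1) (Iq : ℝ)
    (hIqInt : Integrable (fun ξ : EuclideanSpace ℝ (Fin n) =>
      (1 + |∏ j, ξ j| ^ k) ^ (-(1 - q))))
    (hIq : Iq = ∫ ξ : EuclideanSpace ℝ (Fin n), (1 + |∏ j, ξ j| ^ k) ^ (-(1 - q))) :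
    p x ≤ (2 * π) ^ (-(n : ℝ)) * Iq * M ^ q * A ^ (1 - q) := by
  obtain ⟨hq0, hq1⟩ := hq
  set g : EuclideanSpace ℝ (Fin n) → ℂ := fun u => ((p u * φR u : ℝ) : ℂ) with hgdef
  have hMnn : 0 ≤ M := le_trans (norm_nonneg _) (hMb 0)
  have h2pi : (0:ℝ) < 2 * π := by positivity
  have h2pine : (-(2 * π)) ≠ 0 := neg_ne_zero.mpr (ne_of_gt h2pi)
  have hgc : Continuous g := Complex.continuous_ofReal.comp (hpc.mul hφsmooth.continuous)
  have hgi : Integrable g := by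
    refine (hpint.mono hgc.aestronglyMeasurable ?_)
    filter_upwards with u
    simp only [hgdef, Complex.norm_real, Real.norm_eq_abs, abs_mul,
      abs_of_nonneg (hp0 u), abs_of_nonneg (hφ01 u).1]
    calc p u * φR u ≤ p u * 1 := mul_le_mul_of_nonneg_left (hφ01 u).2 (hp0 u)
      _ = p u := mul_one _
  -- relation between 𝓕 g and gHat
  have hF : ∀ ξ : EuclideanSpace ℝ (Fin n), 𝓕 g ξ = gHat ((-(2 * π)) • ξ) := by
    intro ξ
    rw [hg, Real.fourier_eq']
    congr 1
    ext u
    rw [real_inner_smul_left, real_inner_comm, smul_eq_mul]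
    push_cast
    ring_nf
    rw [hgdef]
    push_cast
    ring
  -- interpolation bound
  set F : EuclideanSpace ℝ (Fin n) → ℝ :=
    fun η => M ^ q * A ^ (1 - q) * (1 + |∏ j, η j| ^ k) ^ (-(1 - q)) with hFdef
  have hFnn : ∀ η, 0 ≤ F η := by
    intro η
    apply mul_nonneg (mul_nonneg (Real.rpow_nonneg hMnn _) (Real.rpow_nonneg hA.le _))
    exact Real.rpow_nonneg (by positivity) _
  have hFint : Integrable F := (hIqInt.const_mul _)
  have hbound : ∀ η, ‖gHat η‖ ≤ F η := by
    intro η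
    have ht : (0:ℝ) ≤ |∏ j, η j| ^ k := by positivity
    have h1t : (0:ℝ) < 1 + |∏ j, η j| ^ k := by linarith
    have hc0 : 0 ≤ ‖gHat η‖ := norm_nonneg _
    rcases eq_or_lt_of_le hc0 with hc | hc
    · rw [← hc]; exact hFnn η
    · have hsplit : ‖gHat η‖
          = ‖gHat η‖ ^ q * ‖gHat η‖ ^ (1 - q) := by
        rw [← Real.rpow_add hc, add_sub_cancel, Real.rpow_one]
      rw [hsplit]
      have h1 : ‖gHat η‖ ^ q ≤ M ^ q :=
        Real.rpow_le_rpow hc0 (hMb η) hq0.le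
      have h2 : ‖gHat η‖ ^ (1 - q)
          ≤ A ^ (1 - q) * (1 + |∏ j, η j| ^ k) ^ (-(1 - q)) := by
        rw [Real.rpow_neg h1t.le, ← div_eq_mul_inv, ← Real.div_rpow hA.le h1t.le]
        exact Real.rpow_le_rpow hc0 (hAb η) (by linarith : (0:ℝ) ≤ 1 - q)
      calc ‖gHat η‖ ^ q * ‖gHat η‖ ^ (1 - q)
          ≤ M ^ q * (A ^ (1 - q) * (1 + |∏ j, η j| ^ k) ^ (-(1 - q))) :=
            mul_le_mul h1 h2 (Real.rpow_nonneg hc0 _) (Real.rpow_nonneg hMnn _)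
        _ = F η := by rw [hFdef]; ring
  -- gHat is continuous, hence 𝓕 g integrable
  have hFgc : Continuous (𝓕 g) := by
    refine VectorFourier.fourierIntegral_continuous Real.continuous_fourierChar ?_ hgi
    simp only [LinearMap.neg_apply, innerₗ_apply_apply]
    exact continuous_inner
  have hgHatc : Continuous gHat := by
    have heq : gHat = fun η => 𝓕 g ((-(2 * π))⁻¹ • η) := by
      ext η
      rw [hF, ← mul_smul, mul_inv_cancel₀ h2pine, one_smul]
    rw [heq]
    exact hFgc.comp (continuous_const_smul _)
  have hgHati : Integrable gHat :=
    hFint.mono' hgHatc.aestronglyMeasurable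
      (by filter_upwards with η; exact hbound η)
  have hFgi : Integrable (𝓕 g) := by
    have h4 : Integrable (fun ξ : EuclideanSpace ℝ (Fin n) => gHat ((-(2 * π)) • ξ)) :=
      hgHati.comp_smul h2pine
    exact h4.congr (by filter_upwards with ξ; rw [hF])
  -- Fourier inversion
  have hinv : g x = 𝓕⁻ (𝓕 g) x := by rw [hgc.fourierInv_fourier_eq hgi hFgi]
  have hpx : p x = ‖g x‖ := by
    rw [hgdef]
    simp only [hφ1 x (Metric.mem_ball_self (by linarith)), mul_one, Complex.norm_real, Real.norm_eq_abs,
      abs_of_nonneg (hp0 x)]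
  -- norm bound on the inverse Fourier integral
  have hstep1 : p x ≤ ∫ ξ, ‖𝓕 g ξ‖ := by
    rw [hpx, hinv, Real.fourierInv_eq]
    refine le_trans (norm_integral_le_integral_norm _) ?_
    apply le_of_eq
    congr 1
    ext ξ
    simp [Circle.smul_def, map_mul, Circle.norm_coe]
  -- change of variables
  have hstep2 : (∫ ξ, ‖𝓕 g ξ‖) ≤ ∫ ξ : EuclideanSpace ℝ (Fin n), F ((-(2 * π)) • ξ) := by
    refine integral_mono hFgi.norm (hFint.comp_smul h2pine) ?_
    intro ξ
    dsimp only
    rw [hF ξ]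
    exact hbound _
  have hstep3 : (∫ ξ : EuclideanSpace ℝ (Fin n), F ((-(2 * π)) • ξ))
      = ((2 * π) ^ n)⁻¹ * (M ^ q * A ^ (1 - q) * Iq) := by
    rw [Measure.integral_comp_smul volume F (-(2 * π))]
    rw [finrank_euclideanSpace_fin]
    rw [hFdef]
    simp only [smul_eq_mul]
    rw [integral_const_mul, ← hIq, abs_inv, abs_pow, abs_neg, abs_of_pos h2pi]
  -- conclusion
  have hfinal : (2 * π) ^ (-(n : ℝ)) = ((2 * π) ^ n)⁻¹ := by
    rw [Real.rpow_neg h2pi.le, Real.rpow_natCast]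
  calc p x ≤ ∫ ξ, ‖𝓕 g ξ‖ := hstep1
    _ ≤ ∫ ξ : EuclideanSpace ℝ (Fin n), F ((-(2 * π)) • ξ) := hstep2
    _ = ((2 * π) ^ n)⁻¹ * (M ^ q * A ^ (1 - q) * Iq) := hstep3
    _ = (2 * π) ^ (-(n : ℝ)) * Iq * M ^ q * A ^ (1 - q) := by rw [hfinal]; ring
end
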